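/- Let C, D, D' be chambers of a locally finite hyperplane arrangement and F' ⪯ F faces with F' a face of both D and D'. Suppose D = C.F and D' = C.F' (i.e. no hyperplane of supp(F) separates C and D, and none of supp(F') separates C and D'). Let E = D^F and E' = D'^{F'} be the opposite chambers. Then s(C,E') ⊆ s(C,E), i.e. E' ≤_C E in the tope poset based at C. -/

import Mathlib

/-!
For chambers, separation is parity: a hyperplane separates `C` from `E` iff it separates exactly
one of the pairs `(C, D)`, `(D, E)`. A hyperplane of `supp F` separates `D` from `E` but not `C`
from `D`, hence it separates `C` from `E`. A hyperplane outside `supp F` is also outside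
`supp F' ⊆ supp F`, so it separates neither `D` from `E` nor `D'` from `E'`; nor does it separate
`D` from `D'`, which share a point of `F'` off the hyperplane. Parity along `C, D', E'` and then
along `C, D, D'` turns separation of `C` from `E'` into separation of `C` from `D`, hence from `E`.
-/

open Metric Set MeasureTheory

noncomputable section

/-- A locally finite arrangement of affine hyperplanes in ℝⁿ, given by affine
equations `⟪a i, x⟫ = b i` with `a i ≠ 0`, indexed injectively by `ι`. -/
structure Arrangement (n : ℕ) (ι : Type) where
  a : ι → EuclideanSpace ℝ (Fin n)
  b : ι → ℝ
  ha : ∀ i, a i ≠ 0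
  inj : Function.Injective fun i => {x : EuclideanSpace ℝ (Fin n) | (inner ℝ (a i) x : ℝ) = b i}
  locFin : ∀ x : EuclideanSpace ℝ (Fin n), ∃ ε > 0,
    {i : ι | ∃ y ∈ Metric.ball x ε, (inner ℝ (a i) y : ℝ) = b i}.Finite

namespace Arrangement

variable {n : ℕ} {ι : Type} (A : Arrangement n ι)

/-- The defining affine functional of the `i`-th hyperplane. -/
def val (i : ι) (x : EuclideanSpace ℝ (Fin n)) : ℝ := (inner ℝ (A.a i) x : ℝ) - A.b i

/-- The `i`-th hyperplane. -/
def hyperplane (i : ι) : Set (EuclideanSpace ℝ (Fin n)) := {x | A.val i x = 0}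

/-- The sign vector of a point. -/
def signAt (x : EuclideanSpace ℝ (Fin n)) : ι → SignType := fun i => SignType.sign (A.val i x)

/-- The (relatively open) stratum with sign vector `σ`. -/
def openCell (σ : ι → SignType) : Set (EuclideanSpace ℝ (Fin n)) :=
  {x | ∀ i, SignType.sign (A.val i x) = σ i}

/-- The (closed) faces of the arrangement: closures of the strata. -/
def IsFace (F : Set (EuclideanSpace ℝ (Fin n))) : Prop :=
  ∃ x : EuclideanSpace ℝ (Fin n), F = closure (A.openCell (A.signAt x))

/-- Chambers: closed faces of codimension 0. -/
def IsChamber (C : Set (EuclideanSpace ℝ (Fin n))) : Prop :=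
  ∃ x : EuclideanSpace ℝ (Fin n), (∀ i, A.val i x ≠ 0) ∧
    C = closure (A.openCell (A.signAt x))

/-- The support of a subset: the hyperplanes containing it. -/
def supp (U : Set (EuclideanSpace ℝ (Fin n))) : Set ι := {i | U ⊆ A.hyperplane i}

/-- The set of hyperplanes separating two chambers. -/
def sep (C C' : Set (EuclideanSpace ℝ (Fin n))) : Set ι :=
  {i | ∀ x ∈ interior C, ∀ y ∈ interior C', A.val i x * A.val i y < 0}

/-- `F` is a face of the chamber (or face) `C`. -/
def IsFaceOf (F C : Set (EuclideanSpace ℝ (Fin n))) : Prop := A.IsFace F ∧ F ⊆ C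

/-- `A.IsCF C F D` means `D = C.F`: `D` is the unique chamber containing `F` and not
separated from `C` by any hyperplane of `supp F`. -/
def IsCF (C F D : Set (EuclideanSpace ℝ (Fin n))) : Prop :=
  A.IsChamber D ∧ F ⊆ D ∧ A.sep C D ∩ A.supp F = ∅

/-- `A.IsOpp D F E` means `E = D^F`: `E` is the chamber opposite to `D` with respect to
its face `F`, i.e. the hyperplanes separating `D` and `E` are exactly those containing `F`. -/
def IsOpp (D F E : Set (EuclideanSpace ℝ (Fin n))) : Prop :=
  A.IsChamber E ∧ F ⊆ E ∧ A.sep D E = A.supp F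

/-- Flats: nonempty intersections of subfamilies of hyperplanes (including ℝⁿ itself). -/
def IsFlat (X : Set (EuclideanSpace ℝ (Fin n))) : Prop :=
  X.Nonempty ∧ ∃ s : Set ι, X = ⋂ i ∈ s, A.hyperplane i

/-- A cell `⟨C, F⟩` of the Salvetti complex: a chamber `C` together with a face `F` of `C`. -/
structure Cell {n : ℕ} {ι : Type} (𝒜 : Arrangement n ι) where
  C : Set (EuclideanSpace ℝ (Fin n))
  F : Set (EuclideanSpace ℝ (Fin n))
  isChamber : 𝒜.IsChamber C
  isFace : 𝒜.IsFace F
  faceLe : F ⊆ C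

/-- The Salvetti order: `⟨C,F⟩ ≤ ⟨D,G⟩` iff `F ⪯ G` (i.e. `F ⊇ G`) and `D.F = C`. -/
def cellLE (c d : A.Cell) : Prop := d.F ⊆ c.F ∧ A.IsCF d.C c.F c.C

/-- The subcomplex `S(C)`: cells `⟨D,F⟩` with `D = C.F`. -/
def inS (C : Set (EuclideanSpace ℝ (Fin n))) (c : A.Cell) : Prop := A.IsCF C c.F c.C

/-- A strict total order on the chambers. -/
def IsChamberOrder (lt : Set (EuclideanSpace ℝ (Fin n)) → Set (EuclideanSpace ℝ (Fin n)) → Prop) :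
    Prop :=
  (∀ C C', A.IsChamber C → A.IsChamber C' → C ≠ C' → lt C C' ∨ lt C' C) ∧
  (∀ C, ¬ lt C C) ∧
  (∀ C C' C'', lt C C' → lt C' C'' → lt C C'')

/-- The upper ideal `J(C)` of the poset of flats determined by a total order on chambers. -/
def J (lt : Set (EuclideanSpace ℝ (Fin n)) → Set (EuclideanSpace ℝ (Fin n)) → Prop)
    (C : Set (EuclideanSpace ℝ (Fin n))) : Set (Set (EuclideanSpace ℝ (Fin n))) :=
  {X | A.IsFlat X ∧ ∀ C', A.IsChamber C' → lt C' C → (A.supp X ∩ A.sep C C').Nonempty}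

/-- A valid order: for each chamber `C`, the ideal `J(C)` is the principal upper ideal
(in the poset of flats ordered by reverse inclusion) generated by `X_C = |F_C|` for some
face `F_C` of `C`. -/
def IsValidOrder
    (lt : Set (EuclideanSpace ℝ (Fin n)) → Set (EuclideanSpace ℝ (Fin n)) → Prop) : Prop :=
  A.IsChamberOrder lt ∧
  ∀ C, A.IsChamber C → ∃ F_C, A.IsFaceOf F_C C ∧
    A.J lt C = {X | A.IsFlat X ∧ X ⊆ (affineSpan ℝ F_C : Set (EuclideanSpace ℝ (Fin n)))}

/-- Membership in `N(C)`: cells of `S(C)` not lying in any earlier `S(C')`. -/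
def inN (lt : Set (EuclideanSpace ℝ (Fin n)) → Set (EuclideanSpace ℝ (Fin n)) → Prop)
    (C : Set (EuclideanSpace ℝ (Fin n))) (c : A.Cell) : Prop :=
  A.inS C c ∧ ∀ C', A.IsChamber C' → lt C' C → ¬ A.inS C' c

/-- A point `x₀` is generic with respect to `A`: (i) chambers at equal distance from `x₀`
have the same metric projection of `x₀`, lying in their intersection; (ii) distances to
strictly comparable flats are strictly comparable. -/
def IsGeneric (x₀ : EuclideanSpace ℝ (Fin n)) : Prop :=
  (∀ C C', A.IsChamber C → A.IsChamber C' → infDist x₀ C = infDist x₀ C' →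
    ∀ p ∈ C, ∀ p' ∈ C', (∀ q ∈ C, dist x₀ p ≤ dist x₀ q) →
      (∀ q ∈ C', dist x₀ p' ≤ dist x₀ q) → p = p' ∧ p ∈ C ∩ C') ∧
  (∀ L L', A.IsFlat L → A.IsFlat L' → L' ⊂ L → infDist x₀ L < infDist x₀ L')

end Arrangement

theorem SignType.ne_iff_mul_eq_neg_one {s t : SignType} (hs : s ≠ 0) (ht : t ≠ 0) :
    s ≠ t ↔ s * t = -1 := by
  revert s t; decide

theorem SignType.ne_iff_ne_iff_eq {s t u : SignType} (hs : s ≠ 0) (ht : t ≠ 0) (hu : u ≠ 0) :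
    s ≠ u ↔ (s ≠ t ↔ t = u) := by
  revert s t u; decide

namespace Arrangement

open Topology

variable {n : ℕ} {ι : Type} (A : Arrangement n ι)

theorem continuous_val (i : ι) : Continuous (A.val i) :=
  (continuous_const.inner continuous_id).sub continuous_const

theorem hasFDerivAt_val (i : ι) (x : EuclideanSpace ℝ (Fin n)) :
    HasFDerivAt (A.val i) (innerSL ℝ (A.a i)) x :=
  (innerSL ℝ (A.a i)).hasFDerivAt.sub_const _

theorem mem_openCell_signAt (x : EuclideanSpace ℝ (Fin n)) : x ∈ A.openCell (A.signAt x) :=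
  fun _ => rfl

theorem mul_val_nonneg_of_mem_closure {σ : ι → SignType} {y : EuclideanSpace ℝ (Fin n)}
    (hy : y ∈ closure (A.openCell σ)) (i : ι) : 0 ≤ (σ i : ℝ) * A.val i y := by
  refine closure_minimal (fun z hz => ?_)
    (isClosed_le continuous_const (continuous_const.mul (A.continuous_val i))) hy
  show 0 ≤ (σ i : ℝ) * A.val i z
  rw [← hz i, sign_mul_self]
  exact abs_nonneg _

theorem sign_val_eq_of_mem_closure {σ : ι → SignType} {y : EuclideanSpace ℝ (Fin n)}
    (hy : y ∈ closure (A.openCell σ)) {i : ι} (hy0 : A.val i y ≠ 0) (hσ : σ i ≠ 0) :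
    SignType.sign (A.val i y) = σ i := by
  have h := A.mul_val_nonneg_of_mem_closure hy i
  rcases hy0.lt_or_gt with hneg | hpos <;> rcases hs : σ i <;> simp_all <;> linarith

theorem isOpen_openCell {σ : ι → SignType} (hσ : ∀ i, σ i ≠ 0) : IsOpen (A.openCell σ) := by
  refine isOpen_iff_mem_nhds.2 fun x hx => ?_
  have hx0 : ∀ i, A.val i x ≠ 0 := fun i h => hσ i (by rw [← hx i, h, sign_zero])
  obtain ⟨ε, hε, hfin⟩ := A.locFin x
  have hnear : ∀ i, ∀ᶠ y in 𝓝 x, SignType.sign (A.val i y) = σ i := fun i =>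
    (continuousAt_sign_of_ne_zero (hx0 i)).comp (A.continuous_val i).continuousAt
      ((isOpen_discrete {σ i}).mem_nhds (hx i))
  filter_upwards [ball_mem_nhds x hε, (Filter.eventually_all_finite hfin).2 fun i _ => hnear i]
    with y hy hyS i
  by_cases hi : i ∈ {i | ∃ y ∈ ball x ε, inner ℝ (A.a i) y = A.b i}
  · exact hyS i hi
  -- the `i`-th hyperplane misses the ball, on which the sign of `A.val i` is therefore constant
  have hcont : ContinuousOn (fun y => SignType.sign (A.val i y)) (ball x ε) := fun z hz =>
    ((continuousAt_sign_of_ne_zero (a := A.val i z) fun h => hi ⟨z, hz, sub_eq_zero.1 h⟩).comp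
      (A.continuous_val i).continuousAt).continuousWithinAt
  rw [(convex_ball x ε).isPreconnected.constant hcont hy (mem_ball_self hε), hx i]

theorem val_ne_zero_of_mem_interior_closure {σ : ι → SignType} {z : EuclideanSpace ℝ (Fin n)}
    (hz : z ∈ interior (closure (A.openCell σ))) {i : ι} (hσ : σ i ≠ 0) : A.val i z ≠ 0 := by
  intro hz0
  -- `σ i * A.val i` is nonnegative near `z` and vanishes at `z`,
  -- so its gradient `σ i • a i` vanishes
  have hmin : IsLocalMin (fun y => (σ i : ℝ) * A.val i y) z := by
    filter_upwards [mem_interior_iff_mem_nhds.1 hz] with y hy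
    rw [hz0, mul_zero]
    exact A.mul_val_nonneg_of_mem_closure hy i
  have hgrad := congrArg (· (A.a i))
    (hmin.hasFDerivAt_eq_zero ((A.hasFDerivAt_val i z).const_mul _))
  simp only [smul_apply, innerSL_apply_apply, real_inner_self_eq_norm_sq, zero_apply, smul_eq_mul,
    mul_eq_zero, pow_eq_zero_iff two_ne_zero, norm_eq_zero] at hgrad
  have hσ' : (σ i : ℝ) ≠ 0 := by cases h : σ i <;> simp_all
  exact hgrad.elim hσ' (A.ha i)

theorem sign_val_eq_of_mem_interior_closure {σ : ι → SignType} (hσ : ∀ i, σ i ≠ 0)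
    {z : EuclideanSpace ℝ (Fin n)} (hz : z ∈ interior (closure (A.openCell σ))) (i : ι) :
    SignType.sign (A.val i z) = σ i :=
  A.sign_val_eq_of_mem_closure (interior_subset hz)
    (A.val_ne_zero_of_mem_interior_closure hz (hσ i)) (hσ i)

theorem signAt_ne_zero {x : EuclideanSpace ℝ (Fin n)} (hx : ∀ i, A.val i x ≠ 0) (i : ι) :
    A.signAt x i ≠ 0 :=
  sign_ne_zero.2 (hx i)

theorem mem_interior_closure_openCell_signAt {x : EuclideanSpace ℝ (Fin n)}
    (hx : ∀ i, A.val i x ≠ 0) : x ∈ interior (closure (A.openCell (A.signAt x))) :=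
  interior_maximal subset_closure (A.isOpen_openCell (A.signAt_ne_zero hx))
    (A.mem_openCell_signAt x)

theorem mem_sep_closure_openCell_iff {x x' : EuclideanSpace ℝ (Fin n)}
    (hx : ∀ i, A.val i x ≠ 0) (hx' : ∀ i, A.val i x' ≠ 0) (i : ι) :
    i ∈ A.sep (closure (A.openCell (A.signAt x))) (closure (A.openCell (A.signAt x'))) ↔
      A.signAt x i ≠ A.signAt x' i := by
  rw [SignType.ne_iff_mul_eq_neg_one (A.signAt_ne_zero hx i) (A.signAt_ne_zero hx' i)]
  refine ⟨fun h => ?_, fun h z hz z' hz' => ?_⟩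
  · have := h x (A.mem_interior_closure_openCell_signAt hx) x'
      (A.mem_interior_closure_openCell_signAt hx')
    rwa [← sign_eq_neg_one_iff, sign_mul] at this
  · rwa [← sign_eq_neg_one_iff, sign_mul,
      A.sign_val_eq_of_mem_interior_closure (A.signAt_ne_zero hx) hz,
      A.sign_val_eq_of_mem_interior_closure (A.signAt_ne_zero hx') hz']

theorem mem_sep_iff_of_isChamber {C D E : Set (EuclideanSpace ℝ (Fin n))} (hC : A.IsChamber C)
    (hD : A.IsChamber D) (hE : A.IsChamber E) (i : ι) :
    i ∈ A.sep C E ↔ (i ∈ A.sep C D ↔ i ∉ A.sep D E) := by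
  obtain ⟨x, hx, rfl⟩ := hC
  obtain ⟨y, hy, rfl⟩ := hD
  obtain ⟨z, hz, rfl⟩ := hE
  simp only [A.mem_sep_closure_openCell_iff hx hy, A.mem_sep_closure_openCell_iff hy hz,
    A.mem_sep_closure_openCell_iff hx hz, not_not]
  exact SignType.ne_iff_ne_iff_eq (A.signAt_ne_zero hx i) (A.signAt_ne_zero hy i)
    (A.signAt_ne_zero hz i)

theorem notMem_sep_of_mem_of_val_ne_zero {D D' : Set (EuclideanSpace ℝ (Fin n))}
    (hD : A.IsChamber D) (hD' : A.IsChamber D') {y : EuclideanSpace ℝ (Fin n)} (hyD : y ∈ D)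
    (hyD' : y ∈ D') {i : ι} (hy : A.val i y ≠ 0) : i ∉ A.sep D D' := by
  obtain ⟨x, hx, rfl⟩ := hD
  obtain ⟨x', hx', rfl⟩ := hD'
  rw [A.mem_sep_closure_openCell_iff hx hx', not_not,
    ← A.sign_val_eq_of_mem_closure hyD hy (A.signAt_ne_zero hx i),
    ← A.sign_val_eq_of_mem_closure hyD' hy (A.signAt_ne_zero hx' i)]

theorem notMem_sep_of_notMem_supp {F D D' : Set (EuclideanSpace ℝ (Fin n))}
    (hD : A.IsChamber D) (hD' : A.IsChamber D') (hFD : F ⊆ D) (hFD' : F ⊆ D') {i : ι}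
    (hi : i ∉ A.supp F) : i ∉ A.sep D D' := by
  obtain ⟨y, hyF, hy⟩ := not_subset.1 hi
  exact A.notMem_sep_of_mem_of_val_ne_zero hD hD' (hFD hyF) (hFD' hyF) hy

theorem supp_anti {U V : Set (EuclideanSpace ℝ (Fin n))} (h : U ⊆ V) : A.supp V ⊆ A.supp U :=
  fun _ hi => h.trans hi

end Arrangement

theorem stmt19_general {n : ℕ} {ι : Type} (A : Arrangement n ι)
    (C D D' F F' E E' : Set (EuclideanSpace ℝ (Fin n)))
    (hC : A.IsChamber C) (hD : A.IsChamber D) (hD' : A.IsChamber D')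
    (hFF' : F ⊆ F')
    (hF'D : F' ⊆ D) (hF'D' : F' ⊆ D')
    (hCF : A.IsCF C F D)
    (hE : A.IsOpp D F E) (hE' : A.IsOpp D' F' E') :
    A.sep C E' ⊆ A.sep C E := by
  intro i hi
  have hCDE := A.mem_sep_iff_of_isChamber hC hD hE.1 i
  by_cases hiF : i ∈ A.supp F
  · have hCD : i ∉ A.sep C D := fun h => eq_empty_iff_forall_notMem.1 hCF.2.2 i ⟨h, hiF⟩
    have hDE : i ∈ A.sep D E := hE.2.2 ▸ hiF
    tauto
  · have hiF' : i ∉ A.supp F' := fun h => hiF (A.supp_anti hFF' h)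
    have hDE : i ∉ A.sep D E := hE.2.2 ▸ hiF
    have hD'E' : i ∉ A.sep D' E' := hE'.2.2 ▸ hiF'
    have hDD' : i ∉ A.sep D D' := A.notMem_sep_of_notMem_supp hD hD' hF'D hF'D' hiF'
    have hCD'E' := A.mem_sep_iff_of_isChamber hC hD' hE'.1 i
    have hCDD' := A.mem_sep_iff_of_isChamber hC hD hD' i
    tauto

/-- Let `C, D, D'` be chambers and `F' ⪯ F` faces (i.e. `F ⊆ F'`), with `F'` a face of
both `D` and `D'`, `F` a face of `D`, `D = C.F` and `D' = C.F'`. Then for the opposite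
chambers `E = D^F` and `E' = D'^{F'}` one has `s(C,E') ⊆ s(C,E)`, i.e. `E' ≤_C E`. -/
theorem stmt19 {n : ℕ} {ι : Type} (A : Arrangement n ι)
    (C D D' F F' E E' : Set (EuclideanSpace ℝ (Fin n)))
    (hC : A.IsChamber C) (hD : A.IsChamber D) (hD' : A.IsChamber D')
    (hF : A.IsFace F) (hF' : A.IsFace F') (hFF' : F ⊆ F')
    (hFD : F ⊆ D) (hF'D : F' ⊆ D) (hF'D' : F' ⊆ D')
    (hCF : A.IsCF C F D) (hCF' : A.IsCF C F' D')
    (hE : A.IsOpp D F E) (hE' : A.IsOpp D' F' E') :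
    A.sep C E' ⊆ A.sep C E :=
  stmt19_general A C D D' F F' E E' hC hD hD' hFF' hF'D hF'D' hCF hE hE'
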